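/- arXiv:1211.5171 — 6 statements merged into one kernel-verified Lean document; each statement's English description precedes it below -/
import Mathlib

section
/- Let X be a finite set with N elements, A : X × X → ℝ a symmetric matrix, and Ψ an N × m real matrix (rows indexed by X) with linearly independent columns. Suppose A is conditionally positive definite with respect to Ψ, i.e. for every nonzero a ∈ ℝ^X with Ψᵀa = 0 one has aᵀAa > 0. Then the (N+m) × (N+m) block matrix [[A, Ψ], [Ψᵀ, 0]] (with the m × m zero matrix in the lower-right block) is invertible. -/
/-!
If `(a, b)` lies in the kernel of the block matrix, then `A a + Ψ b = 0` and `Ψᵀ a = 0`.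
Pairing the first equation with `a` kills the `Ψ b` term, because `a ⬝ Ψ b = Ψᵀ a ⬝ b = 0`;
so `a ⬝ A a = 0` and conditional positive definiteness forces `a = 0`. Then `Ψ b = 0`, and the
independence of the columns of `Ψ` gives `b = 0`.
-/

namespace Matrix

variable {R n m : Type*} [CommRing R] [Preorder R] [Fintype n] [Fintype m]

def CondPosDef (A : Matrix n n R) (Ψ : Matrix n m R) : Prop :=
  ∀ a : n → R, a ≠ 0 → Ψᵀ *ᵥ a = 0 → 0 < a ⬝ᵥ A *ᵥ a

namespace CondPosDef

variable {A : Matrix n n R} {Ψ : Matrix n m R}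

theorem eq_zero_of_mulVec_add_mulVec_eq_zero (hA : A.CondPosDef Ψ) {a : n → R} {b : m → R}
    (ha : Ψᵀ *ᵥ a = 0) (hab : A *ᵥ a + Ψ *ᵥ b = 0) : a = 0 := by
  by_contra hne
  have hΨb : a ⬝ᵥ Ψ *ᵥ b = 0 := by
    rw [dotProduct_mulVec, ← mulVec_transpose, ha, zero_dotProduct]
  have hAa : a ⬝ᵥ A *ᵥ a = 0 :=
    calc a ⬝ᵥ A *ᵥ a = a ⬝ᵥ (A *ᵥ a + Ψ *ᵥ b) := by rw [dotProduct_add, hΨb, add_zero]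
      _ = 0 := by rw [hab, dotProduct_zero]
  exact lt_irrefl _ (hAa ▸ hA a hne ha)

theorem fromBlocks_mulVec_injective (hA : A.CondPosDef Ψ) (hΨ : Function.Injective Ψ.mulVec) :
    Function.Injective (fromBlocks A Ψ Ψᵀ (0 : Matrix m m R)).mulVec := by
  refine (injective_iff_map_eq_zero (fromBlocks A Ψ Ψᵀ 0).mulVecLin).mpr fun v hv => ?_
  rw [mulVecLin_apply, fromBlocks_mulVec, zero_mulVec, add_zero, ← Sum.elim_zero_zero,
    Sum.elim_eq_iff] at hv
  obtain ⟨hab, ha⟩ := hv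
  have ha0 : v ∘ Sum.inl = 0 := hA.eq_zero_of_mulVec_add_mulVec_eq_zero ha hab
  have hΨb : Ψ *ᵥ (v ∘ Sum.inr) = 0 := by rwa [ha0, mulVec_zero, zero_add] at hab
  have hb0 : v ∘ Sum.inr = 0 := hΨ (hΨb.trans (mulVec_zero Ψ).symm)
  rw [← Sum.elim_comp_inl_inr v, ha0, hb0, Sum.elim_zero_zero]

end CondPosDef

end Matrix

theorem saddle_point_matrix_invertible_general
    {X : Type*} [Fintype X] [DecidableEq X] (m : ℕ)
    (A : Matrix X X ℝ)
    (Ψ : Matrix X (Fin m) ℝ)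
    (hΨ : LinearIndependent ℝ (fun k : Fin m => (fun ξ : X => Ψ ξ k)))
    (hcpd : ∀ a : X → ℝ, a ≠ 0 → Ψ.transpose.mulVec a = 0 →
      0 < dotProduct a (A.mulVec a)) :
    IsUnit (Matrix.fromBlocks A Ψ Ψ.transpose (0 : Matrix (Fin m) (Fin m) ℝ)) :=
  Matrix.mulVec_injective_iff_isUnit.mp <|
    Matrix.CondPosDef.fromBlocks_mulVec_injective hcpd (Matrix.mulVec_injective_iff.mpr hΨ)

/-- If `A` is symmetric and conditionally positive definite with respect to
a matrix `Ψ` with linearly independent columns, then the saddle-point block matrix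
`[[A, Ψ], [Ψᵀ, 0]]` is invertible. -/
theorem saddle_point_matrix_invertible
    {X : Type*} [Fintype X] [DecidableEq X] (N m : ℕ)
    (hN : Fintype.card X = N)
    (A : Matrix X X ℝ) (hA : A.IsSymm)
    (Ψ : Matrix X (Fin m) ℝ)
    (hΨ : LinearIndependent ℝ (fun k : Fin m => (fun ξ : X => Ψ ξ k)))
    (hcpd : ∀ a : X → ℝ, a ≠ 0 → Ψ.transpose.mulVec a = 0 →
      0 < dotProduct a (A.mulVec a)) :
    IsUnit (Matrix.fromBlocks A Ψ Ψ.transpose (0 : Matrix (Fin m) (Fin m) ℝ)) :=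
  saddle_point_matrix_invertible_general m A Ψ hΨ hcpd
end

section
/- Let X be a finite set with N elements, A : X × X → ℝ a symmetric matrix, and Ψ an N × m real matrix with linearly independent columns, such that A is conditionally positive definite with respect to Ψ (aᵀAa > 0 for every nonzero a with Ψᵀa = 0). Then for every data vector y ∈ ℝ^X there exist unique vectors a ∈ ℝ^X and b ∈ ℝ^m such that Ψᵀa = 0 and Aa + Ψb = y; i.e., the constrained kernel interpolation problem is uniquely solvable. -/
/-! For a conditionally positive definite `A`, the block system `[[A, Ψ], [Ψᵀ, 0]]` is
injective: if `Ψᵀ a = 0` and `A a + Ψ b = 0`, pairing the second equation with `a` gives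
`aᵀ A a = -(Ψᵀ a)ᵀ b = 0`, so `a = 0`, and then `Ψ b = 0` forces `b = 0` because the columns
of `Ψ` are independent. A square linear system in finite dimension that is injective is
bijective, which is unique solvability. -/

namespace Matrix

section CommRing

variable {R n ι : Type*} [CommRing R] [Fintype n] [Fintype ι]

def saddlePointLin (A : Matrix n n R) (Ψ : Matrix n ι R) :
    (n → R) × (ι → R) →ₗ[R] (n → R) × (ι → R) :=
  (A.mulVecLin ∘ₗ LinearMap.fst R _ _ + Ψ.mulVecLin ∘ₗ LinearMap.snd R _ _).prod
    (Ψᵀ.mulVecLin ∘ₗ LinearMap.fst R _ _)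

@[simp]
theorem saddlePointLin_apply (A : Matrix n n R) (Ψ : Matrix n ι R) (p : (n → R) × (ι → R)) :
    saddlePointLin A Ψ p = (A *ᵥ p.1 + Ψ *ᵥ p.2, Ψᵀ *ᵥ p.1) :=
  rfl

theorem saddlePointLin_injective {A : Matrix n n R} {Ψ : Matrix n ι R}
    (hΨ : Function.Injective Ψ.mulVec)
    (hA : ∀ a : n → R, a ≠ 0 → Ψᵀ *ᵥ a = 0 → a ⬝ᵥ A *ᵥ a ≠ 0) :
    Function.Injective (saddlePointLin A Ψ) := by
  rw [← LinearMap.ker_eq_bot, LinearMap.ker_eq_bot']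
  rintro ⟨a, b⟩ hab
  obtain ⟨hfirst, hconstraint⟩ : A *ᵥ a + Ψ *ᵥ b = 0 ∧ Ψᵀ *ᵥ a = 0 := by
    simpa [Prod.ext_iff] using hab
  have hquad : a ⬝ᵥ A *ᵥ a = 0 := by
    have hpair : a ⬝ᵥ Ψ *ᵥ b = 0 := by
      rw [dotProduct_mulVec, ← mulVec_transpose, hconstraint, zero_dotProduct]
    simpa [dotProduct_add, hpair] using congrArg (a ⬝ᵥ ·) hfirst
  obtain rfl : a = 0 := by
    by_contra ha
    exact hA a ha hconstraint hquad
  have hb : b = 0 := hΨ <| by simpa using hfirst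
  simp [hb]

end CommRing

theorem saddlePointLin_bijective {K n ι : Type*} [Field K] [Fintype n] [Fintype ι]
    {A : Matrix n n K} {Ψ : Matrix n ι K} (hΨ : Function.Injective Ψ.mulVec)
    (hA : ∀ a : n → K, a ≠ 0 → Ψᵀ *ᵥ a = 0 → a ⬝ᵥ A *ᵥ a ≠ 0) :
    Function.Bijective (saddlePointLin A Ψ) :=
  have hinj := saddlePointLin_injective hΨ hA
  ⟨hinj, LinearMap.injective_iff_surjective.mp hinj⟩

end Matrix

theorem kernel_interpolation_unique_solvability_general
    {X : Type*} [Fintype X] (m : ℕ)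
    (A : Matrix X X ℝ)
    (Ψ : Matrix X (Fin m) ℝ)
    (hΨ : LinearIndependent ℝ (fun k : Fin m => (fun ξ : X => Ψ ξ k)))
    (hcpd : ∀ a : X → ℝ, a ≠ 0 → Ψ.transpose.mulVec a = 0 →
      0 < dotProduct a (A.mulVec a)) :
    ∀ y : X → ℝ, ∃! p : (X → ℝ) × (Fin m → ℝ),
      Ψ.transpose.mulVec p.1 = 0 ∧ A.mulVec p.1 + Ψ.mulVec p.2 = y := by
  have hbij : Function.Bijective (Matrix.saddlePointLin A Ψ) :=
    Matrix.saddlePointLin_bijective (Matrix.mulVec_injective_iff.mpr hΨ) fun a ha h =>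
      (hcpd a ha h).ne'
  intro y
  simpa [Prod.ext_iff, and_comm] using hbij.existsUnique (y, 0)

/-- For a symmetric matrix `A` that is conditionally positive definite with
respect to `Ψ` (with linearly independent columns), the constrained kernel interpolation
problem `Ψᵀa = 0`, `Aa + Ψb = y` has a unique solution `(a, b)` for every data vector `y`. -/
theorem kernel_interpolation_unique_solvability
    {X : Type*} [Fintype X] [DecidableEq X] (N m : ℕ)
    (hN : Fintype.card X = N)
    (A : Matrix X X ℝ) (hA : A.IsSymm)
    (Ψ : Matrix X (Fin m) ℝ)
    (hΨ : LinearIndependent ℝ (fun k : Fin m => (fun ξ : X => Ψ ξ k)))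
    (hcpd : ∀ a : X → ℝ, a ≠ 0 → Ψ.transpose.mulVec a = 0 →
      0 < dotProduct a (A.mulVec a)) :
    ∀ y : X → ℝ, ∃! p : (X → ℝ) × (Fin m → ℝ),
      Ψ.transpose.mulVec p.1 = 0 ∧ A.mulVec p.1 + Ψ.mulVec p.2 = y :=
  kernel_interpolation_unique_solvability_general m A Ψ hΨ hcpd
end

section
/- Let (M, μ) be a measure space, X ⊂ M a finite set, and κ : M × M → ℝ a symmetric kernel (κ(x,y) = κ(y,x)) such that for each ξ ∈ X the function x ↦ κ(x,ξ) is μ-integrable and ∫_M κ(x,ξ) dμ(x) = J₀ is the same constant for every ξ ∈ X. Let ψ₁, …, ψ_m : M → ℝ be μ-integrable with J_k = ∫_M ψ_k dμ, let A be the X × X matrix A_{ξη} = κ(ξ,η) and Ψ the X × m matrix Ψ_{ξk} = ψ_k(ξ). Suppose c ∈ ℝ^X and d ∈ ℝ^m satisfy Ac + Ψd = J₀·𝟏 and Ψᵀc = J, where 𝟏 ∈ ℝ^X is the all-ones vector and J = (J₁, …, J_m)ᵀ. Then for every a ∈ ℝ^X with Ψᵀa = 0 and every b ∈ ℝ^m,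 the function s(x) = Σ_{ξ∈X} a_ξ κ(x,ξ) + Σ_{k=1}^m b_k ψ_k(x) satisfies ∫_M s dμ = Σ_{ξ∈X} c_ξ s(ξ). -/
open MeasureTheory

/-- If the weights `c, d` solve the quadrature system `Ac + Ψd = J₀·𝟏`,
`Ψᵀc = J`, then the quadrature rule `s ↦ Σ_ξ c_ξ s(ξ)` integrates exactly every function
`s(x) = Σ_ξ a_ξ κ(x,ξ) + Σ_k b_k ψ_k(x)` with `Ψᵀa = 0`. -/
theorem quadrature_exact_on_VX
    {M : Type*} [MeasurableSpace M] (μ : Measure M)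
    (X : Finset M) (m : ℕ) (κ : M → M → ℝ)
    (hsym : ∀ x y : M, κ x y = κ y x)
    (hint : ∀ ξ ∈ X, Integrable (fun x => κ x ξ) μ)
    (J₀ : ℝ) (hJ₀ : ∀ ξ ∈ X, ∫ x, κ x ξ ∂μ = J₀)
    (ψ : Fin m → M → ℝ)
    (hψ : ∀ k, Integrable (ψ k) μ)
    (J : Fin m → ℝ) (hJ : ∀ k, ∫ x, ψ k x ∂μ = J k)
    (c : M → ℝ) (d : Fin m → ℝ)
    (hc : ∀ ξ ∈ X, (∑ η ∈ X, κ ξ η * c η) + ∑ k, ψ k ξ * d k = J₀)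
    (hΨc : ∀ k, ∑ ξ ∈ X, ψ k ξ * c ξ = J k)
    (a : M → ℝ) (ha : ∀ k, ∑ ξ ∈ X, ψ k ξ * a ξ = 0)
    (b : Fin m → ℝ) :
    ∫ x, ((∑ ξ ∈ X, a ξ * κ x ξ) + ∑ k, b k * ψ k x) ∂μ
      = ∑ ξ ∈ X, c ξ * ((∑ η ∈ X, a η * κ ξ η) + ∑ k, b k * ψ k ξ) := by
  have hfint : Integrable (fun x => ∑ ξ ∈ X, a ξ * κ x ξ) μ :=
    integrable_finset_sum _ (fun ξ hξ => (hint ξ hξ).const_mul (a ξ))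
  have hgint : Integrable (fun x => ∑ k, b k * ψ k x) μ :=
    integrable_finset_sum _ (fun k _ => (hψ k).const_mul (b k))
  rw [integral_add hfint hgint,
      integral_finset_sum _ (fun ξ hξ => (hint ξ hξ).const_mul (a ξ)),
      integral_finset_sum _ (fun k _ => (hψ k).const_mul (b k))]
  simp_rw [integral_const_mul]
  have h1 : ∑ ξ ∈ X, a ξ * ∫ x, κ x ξ ∂μ = (∑ ξ ∈ X, a ξ) * J₀ :=
    by rw [Finset.sum_mul]; exact Finset.sum_congr rfl fun ξ hξ => by rw [hJ₀ ξ hξ]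
  have h2 : ∑ k, b k * ∫ x, ψ k x ∂μ = ∑ k, b k * J k := by simp_rw [hJ]
  rw [h1, h2]
  -- RHS
  have hR : ∑ ξ ∈ X, c ξ * ((∑ η ∈ X, a η * κ ξ η) + ∑ k, b k * ψ k ξ)
      = (∑ ξ ∈ X, a ξ) * J₀ + ∑ k, b k * J k := by
    simp_rw [mul_add, Finset.sum_add_distrib]
    congr 1
    · -- kernel part
      have swap : ∑ ξ ∈ X, c ξ * ∑ η ∈ X, a η * κ ξ η
          = ∑ η ∈ X, a η * ∑ ξ ∈ X, κ η ξ * c ξ := by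
        calc ∑ ξ ∈ X, c ξ * ∑ η ∈ X, a η * κ ξ η
            = ∑ ξ ∈ X, ∑ η ∈ X, a η * (κ η ξ * c ξ) := by
              refine Finset.sum_congr rfl fun ξ _ => ?_
              rw [Finset.mul_sum]
              exact Finset.sum_congr rfl fun η _ => by rw [hsym ξ η]; ring
          _ = ∑ η ∈ X, a η * ∑ ξ ∈ X, κ η ξ * c ξ := by
              rw [Finset.sum_comm]; simp_rw [Finset.mul_sum]
      rw [swap]
      have key : ∀ η ∈ X, ∑ ξ ∈ X, κ η ξ * c ξ = J₀ - ∑ k, ψ k η * d k :=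
        fun η hη => by have := hc η hη; linarith
      calc ∑ η ∈ X, a η * ∑ ξ ∈ X, κ η ξ * c ξ
          = ∑ η ∈ X, (a η * J₀ - ∑ k, a η * (ψ k η * d k)) := by
            refine Finset.sum_congr rfl fun η hη => ?_
            rw [key η hη, mul_sub, Finset.mul_sum]
        _ = (∑ η ∈ X, a η) * J₀ - ∑ η ∈ X, ∑ k, a η * (ψ k η * d k) := by
            rw [Finset.sum_sub_distrib, Finset.sum_mul]
        _ = (∑ η ∈ X, a η) * J₀ := by
            rw [Finset.sum_comm]
            have : ∀ k : Fin m, ∑ η ∈ X, a η * (ψ k η * d k) = 0 := by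
              intro k
              have := ha k
              calc ∑ η ∈ X, a η * (ψ k η * d k)
                  = (∑ η ∈ X, ψ k η * a η) * d k := by
                    rw [Finset.sum_mul]; exact Finset.sum_congr rfl fun η _ => by ring
                _ = 0 := by rw [this, zero_mul]
            simp [this]
    · -- ψ part
      simp_rw [Finset.mul_sum]
      rw [Finset.sum_comm]
      refine Finset.sum_congr rfl fun k _ => ?_
      rw [← hΨc k, Finset.mul_sum]
      exact Finset.sum_congr rfl fun ξ _ => by ring
  rw [hR]
end

section
/- Let (M, μ) be a measure space, X ⊂ M finite, κ : M × M → ℝ a symmetric kernel with x ↦ κ(x,ξ) μ-integrable for each ξ ∈ X and ∫_M κ(x,ξ) dμ(x) = J₀ independent of ξ, and ψ₁, …, ψ_m : M → ℝ μ-integrable with J_k = ∫_M ψ_k dμ. Let A_{ξη} = κ(ξ,η), Ψ_{ξk} = ψ_k(ξ), and suppose c ∈ ℝ^X, d ∈ ℝ^m satisfy Ac + Ψd = J₀·𝟏 and Ψᵀc = J. If χ_ξ(x) = Σ_{η∈X} a_η κ(x,η) + Σ_k b_k ψ_k(x) with Ψᵀa = 0 is a Lagrange function centered at ξ, i.e.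 χ_ξ(η) = 1 if η = ξ and χ_ξ(η) = 0 for η ∈ X, η ≠ ξ, then the quadrature weight satisfies c_ξ = ∫_M χ_ξ(x) dμ(x), and consequently |c_ξ| ≤ ∫_M |χ_ξ(x)| dμ(x) = ‖χ_ξ‖_{L¹(M)}. -/
open MeasureTheory

/-- If `c, d` solve the quadrature system and `χ` is the Lagrange function
centered at `ξ₀ ∈ X` (an element of `V_X` that is 1 at `ξ₀` and 0 at the other nodes),
then the quadrature weight satisfies `c_{ξ₀} = ∫ χ dμ`, and hence
`|c_{ξ₀}| ≤ ∫ |χ| dμ = ‖χ‖_{L¹}`. -/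
theorem quadrature_weight_eq_integral_lagrange
    {M : Type*} [MeasurableSpace M] [DecidableEq M] (μ : Measure M)
    (X : Finset M) (m : ℕ) (κ : M → M → ℝ)
    (hsym : ∀ x y : M, κ x y = κ y x)
    (hint : ∀ ξ ∈ X, Integrable (fun x => κ x ξ) μ)
    (J₀ : ℝ) (hJ₀ : ∀ ξ ∈ X, ∫ x, κ x ξ ∂μ = J₀)
    (ψ : Fin m → M → ℝ)
    (hψ : ∀ k, Integrable (ψ k) μ)
    (J : Fin m → ℝ) (hJ : ∀ k, ∫ x, ψ k x ∂μ = J k)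
    (c : M → ℝ) (d : Fin m → ℝ)
    (hc : ∀ ξ ∈ X, (∑ η ∈ X, κ ξ η * c η) + ∑ k, ψ k ξ * d k = J₀)
    (hΨc : ∀ k, ∑ ξ ∈ X, ψ k ξ * c ξ = J k)
    (ξ₀ : M) (hξ₀ : ξ₀ ∈ X)
    (χ : M → ℝ) (a : M → ℝ) (b : Fin m → ℝ)
    (hχ : ∀ x : M, χ x = (∑ η ∈ X, a η * κ x η) + ∑ k, b k * ψ k x)
    (ha : ∀ k, ∑ η ∈ X, ψ k η * a η = 0)
    (hLagrange : ∀ η ∈ X, χ η = if η = ξ₀ then 1 else 0) :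
    c ξ₀ = ∫ x, χ x ∂μ ∧ |c ξ₀| ≤ ∫ x, |χ x| ∂μ := by
  have hint1 : Integrable (fun x => ∑ η ∈ X, a η * κ x η) μ :=
    integrable_finset_sum _ fun η hη => ((hint η hη).const_mul (a η))
  have hint2 : Integrable (fun x => ∑ k, b k * ψ k x) μ :=
    integrable_finset_sum _ fun k _ => ((hψ k).const_mul (b k))
  have hχint : Integrable χ μ :=
    (hint1.add hint2).congr (Filter.Eventually.of_forall fun x => (hχ x).symm)
  have h1 : ∫ x, χ x ∂μ = (∑ η ∈ X, a η * J₀) + ∑ k, b k * J k := by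
    have e : ∫ x, χ x ∂μ = ∫ x, ((∑ η ∈ X, a η * κ x η) + ∑ k, b k * ψ k x) ∂μ :=
      integral_congr_ae (Filter.Eventually.of_forall fun x => hχ x)
    rw [e, integral_add hint1 hint2,
      integral_finset_sum _ (fun η hη => ((hint η hη).const_mul (a η))),
      integral_finset_sum _ (fun k _ => ((hψ k).const_mul (b k)))]
    congr 1
    · exact Finset.sum_congr rfl fun η hη => by rw [integral_const_mul, hJ₀ η hη]
    · exact Finset.sum_congr rfl fun k _ => by rw [integral_const_mul, hJ k]
  have T1 : ∑ η ∈ X, ∑ η' ∈ X, a η * (κ η η' * c η')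
      = ∑ η' ∈ X, (∑ η ∈ X, a η * κ η' η) * c η' := by
    rw [Finset.sum_comm]
    exact Finset.sum_congr rfl fun η' _ => by
      rw [Finset.sum_mul]
      exact Finset.sum_congr rfl fun η _ => by rw [hsym η η']; ring
  have T2 : ∑ η ∈ X, ∑ k, a η * (ψ k η * d k) = ∑ k, d k * ∑ η ∈ X, ψ k η * a η := by
    rw [Finset.sum_comm]
    exact Finset.sum_congr rfl fun k _ => by
      rw [Finset.mul_sum]
      exact Finset.sum_congr rfl fun η _ => by ring
  have T3 : ∑ k, ∑ ξ ∈ X, b k * (ψ k ξ * c ξ) = ∑ ξ ∈ X, (∑ k, b k * ψ k ξ) * c ξ := by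
    rw [Finset.sum_comm]
    exact Finset.sum_congr rfl fun ξ _ => by
      rw [Finset.sum_mul]
      exact Finset.sum_congr rfl fun k _ => by ring
  have h2 : (∑ η ∈ X, a η * J₀) + ∑ k, b k * J k = c ξ₀ := by
    calc (∑ η ∈ X, a η * J₀) + ∑ k, b k * J k
        = (∑ η ∈ X, ∑ η' ∈ X, a η * (κ η η' * c η')
            + ∑ η ∈ X, ∑ k, a η * (ψ k η * d k))
          + ∑ k, ∑ ξ ∈ X, b k * (ψ k ξ * c ξ) := by
          congr 1
          · rw [← Finset.sum_add_distrib]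
            exact Finset.sum_congr rfl fun η hη => by
              rw [← Finset.mul_sum, ← Finset.mul_sum, ← mul_add, hc η hη]
          · exact Finset.sum_congr rfl fun k _ => by rw [← Finset.mul_sum, hΨc k]
      _ = ∑ η' ∈ X, ((∑ η ∈ X, a η * κ η' η) + ∑ k, b k * ψ k η') * c η' := by
          rw [T1, T2, T3]
          simp only [ha, mul_zero, Finset.sum_const_zero, add_zero,
            ← Finset.sum_add_distrib, ← add_mul]
      _ = ∑ η' ∈ X, (if η' = ξ₀ then (1:ℝ) else 0) * c η' :=
          Finset.sum_congr rfl fun η' hη' => by rw [← hχ η', hLagrange η' hη']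
      _ = c ξ₀ := by
          simp [Finset.sum_ite_eq', hξ₀]
  have heq : c ξ₀ = ∫ x, χ x ∂μ := by rw [h1, h2]
  refine ⟨heq, ?_⟩
  rw [heq]
  simpa [Real.norm_eq_abs] using norm_integral_le_integral_norm (μ := μ) χ
end

section
/- Let X be a finite set with N elements, A : X × X → ℝ a symmetric matrix, Ψ an N × m real matrix with linearly independent columns, J₀ ∈ ℝ, J ∈ ℝ^m, and suppose c ∈ ℝ^X and d ∈ ℝ^m satisfy Ac + Ψd = J₀·𝟏 and Ψᵀc = J, where 𝟏 is the all-ones vector. Let P be the Euclidean orthogonal projection onto the column space of Ψ and P⊥ = I − P, and write c_∥ = Pc = Ψ(ΨᵀΨ)⁻¹J and c_⊥ = P⊥c. Then c_⊥ satisfies the reduced equation P⊥AP⊥ c_⊥ = J₀ P⊥𝟏 − P⊥AΨ(ΨᵀΨ)⁻¹J. Moreover, if the all-ones vector 𝟏 lies in the column space of Ψ, then P⊥𝟏 = 0, so P⊥AP⊥ c_⊥ = −P⊥AΨ(ΨᵀΨ)⁻¹J and c_⊥ is determined independently of J₀. -/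
open Matrix


/-- If `c, d` solve the saddle point system `Ac + Ψd = J₀𝟏`, `Ψᵀc = J`, and
`P` is the Euclidean orthogonal projection onto the column space of `Ψ` with `P⊥ = 1 − P`,
then `c_∥ = Pc = Ψ(ΨᵀΨ)⁻¹J`, and `c_⊥ = P⊥c` satisfies the reduced equation
`P⊥AP⊥c_⊥ = J₀P⊥𝟏 − P⊥AΨ(ΨᵀΨ)⁻¹J`. If moreover `𝟏` lies in the column space of `Ψ`,
then `P⊥𝟏 = 0` and `c_⊥` is determined independently of `J₀`. -/
theorem reduced_weight_system
    {X : Type*} [Fintype X] [DecidableEq X] (N m : ℕ)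
    (hN : Fintype.card X = N)
    (A : Matrix X X ℝ) (hA : A.IsSymm)
    (Ψ : Matrix X (Fin m) ℝ)
    (hΨ : LinearIndependent ℝ (fun k : Fin m => fun ξ : X => Ψ ξ k))
    (J₀ : ℝ) (J : Fin m → ℝ) (c : X → ℝ) (d : Fin m → ℝ)
    (hc : A.mulVec c + Ψ.mulVec d = fun _ => J₀)
    (hΨc : Ψ.transpose.mulVec c = J)
    (P : Matrix X X ℝ)
    (hPrange : ∀ v : X → ℝ, ∃ w : Fin m → ℝ, P.mulVec v = Ψ.mulVec w)
    (hPfix : ∀ w : Fin m → ℝ, P.mulVec (Ψ.mulVec w) = Ψ.mulVec w)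
    (hPorth : ∀ v : X → ℝ, Ψ.transpose.mulVec (v - P.mulVec v) = 0) :
    P.mulVec c = Ψ.mulVec ((Ψ.transpose * Ψ)⁻¹.mulVec J) ∧
    ((1 - P) * A * (1 - P)).mulVec ((1 - P).mulVec c)
      = J₀ • (1 - P).mulVec (fun _ => (1 : ℝ))
        - ((1 - P) * A).mulVec (Ψ.mulVec ((Ψ.transpose * Ψ)⁻¹.mulVec J)) ∧
    ((∃ w : Fin m → ℝ, (fun _ => (1 : ℝ)) = Ψ.mulVec w) →
      (1 - P).mulVec (fun _ => (1 : ℝ)) = 0 ∧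
      ((1 - P) * A * (1 - P)).mulVec ((1 - P).mulVec c)
        = -(((1 - P) * A).mulVec (Ψ.mulVec ((Ψ.transpose * Ψ)⁻¹.mulVec J)))) := by
  -- Ψ has injective mulVec
  have hΨinj : Function.Injective Ψ.mulVec := Matrix.mulVec_injective_iff.mpr hΨ
  -- ΨᵀΨ is a unit
  have hGinj : Function.Injective (Ψ.transpose * Ψ).mulVec := by
    intro u v huv
    have h0 : (Ψ.transpose * Ψ).mulVec (u - v) = 0 := by
      rw [Matrix.mulVec_sub, huv, sub_self]
    have hps : Matrix.PosSemidef (Ψ.transpose * Ψ) := by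
      simpa using Matrix.posSemidef_conjTranspose_mul_self Ψ
    have : star (u - v) ⬝ᵥ (Ψ.transpose * Ψ).mulVec (u - v) = 0 := by
      rw [h0, dotProduct_zero]
    have hΨ0 : Ψ.mulVec (u - v) = 0 := by
      have hd : Ψ.mulVec (u - v) ⬝ᵥ Ψ.mulVec (u - v) = 0 := by
        have h := this
        rwa [← Matrix.mulVec_mulVec, Matrix.dotProduct_mulVec,
          Matrix.vecMul_transpose, star_trivial] at h
      exact dotProduct_self_eq_zero.mp hd
    have huv0 : u - v = 0 := by
      apply hΨinj
      simpa using hΨ0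
    exact sub_eq_zero.mp huv0
  have hGu : IsUnit (Ψ.transpose * Ψ) := Matrix.mulVec_injective_iff_isUnit.mp hGinj
  have hGdet : IsUnit (Ψ.transpose * Ψ).det := (Matrix.isUnit_iff_isUnit_det _).mp hGu
  set G := Ψ.transpose * Ψ with hG
  -- the parallel component
  obtain ⟨w, hw⟩ := hPrange c
  have hΨtPc : Ψ.transpose.mulVec (P.mulVec c) = J := by
    have h0 := hPorth c
    rw [Matrix.mulVec_sub, sub_eq_zero] at h0
    rw [← h0, hΨc]
  have hGw : G.mulVec w = J := by
    rw [← Matrix.mulVec_mulVec] at *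
    rw [← hw, hΨtPc]
  have hwval : w = G⁻¹.mulVec J := by
    apply hGinj
    rw [hGw, Matrix.mulVec_mulVec, Matrix.mul_nonsing_inv _ hGdet, Matrix.one_mulVec]
  have h1 : P.mulVec c = Ψ.mulVec (G⁻¹.mulVec J) := by rw [hw, hwval]
  -- basic facts about Q = 1 - P
  have hQ : ∀ v : X → ℝ, (1 - P).mulVec v = v - P.mulVec v := by
    intro v; rw [Matrix.sub_mulVec, Matrix.one_mulVec]
  have hPP : P.mulVec (P.mulVec c) = P.mulVec c := by
    rw [hw, hPfix]
  have hQQ : (1 - P).mulVec ((1 - P).mulVec c) = (1 - P).mulVec c := by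
    rw [hQ, hQ, Matrix.mulVec_sub, hPP, sub_self, sub_zero]
  have hQΨ : ∀ u : Fin m → ℝ, (1 - P).mulVec (Ψ.mulVec u) = 0 := by
    intro u; rw [hQ, hPfix, sub_self]
  -- the reduced equation
  have hones : (fun _ : X => J₀) = J₀ • (fun _ : X => (1 : ℝ)) := by
    funext x; simp
  have h2 : ((1 - P) * A * (1 - P)).mulVec ((1 - P).mulVec c)
      = J₀ • (1 - P).mulVec (fun _ => (1 : ℝ))
        - ((1 - P) * A).mulVec (Ψ.mulVec (G⁻¹.mulVec J)) := by
    rw [← Matrix.mulVec_mulVec, hQQ, ← Matrix.mulVec_mulVec, ← Matrix.mulVec_mulVec,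
      hQ c, Matrix.mulVec_sub, h1]
    have hAc : A.mulVec c = (fun _ : X => J₀) - Ψ.mulVec d := by
      rw [← hc]; abel
    rw [Matrix.mulVec_sub, hAc, Matrix.mulVec_sub, hQΨ, sub_zero, hones,
      Matrix.mulVec_smul]
  refine ⟨h1, h2, fun ⟨u, hu⟩ => ?_⟩
  have h3 : (1 - P).mulVec (fun _ => (1 : ℝ)) = 0 := by
    rw [hu, hQΨ]
  refine ⟨h3, ?_⟩
  rw [h2, h3, smul_zero, zero_sub]
end

section
/- Let (M, d) be a metric space with a Borel measure μ satisfying μ(M) < ∞, let ξ ∈ M, and suppose there are constants C₁ > 0 and n ∈ ℕ, n ≥ 1, such that μ(B(ξ, r)) ≤ C₁ rⁿ for every r > 0, where B(ξ, r) is the open ball of radius r about ξ. Let ν > 0, let m be an integer with 2m > n, let 0 < h ≤ 1, and let C₀ > 0. If χ : M → ℝ is measurable and satisfies |χ(x)| ≤ C₀ · max( exp(−(ν/h)·d(x,ξ)), h^{2m} ) for all x ∈ M, then ∫_M |χ(x)| dμ(x) ≤ C₀ · ( C₁ · n! · ν^{−n} + μ(M) ) · hⁿ. In particular, ‖χ‖_{L¹(M)}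 ≤ C' hⁿ with a constant C' independent of h and ξ. -/
/-!
Split `max(e^{-a d}, h^{2m}) ≤ e^{-a d} + h^{2m}` with `a = ν / h`. The constant part contributes
`h^{2m} μ(M) ≤ hⁿ μ(M)`. For the exponential part, the layer-cake formula and the substitution
`t = e^{-a s}` give `∫ e^{-a d(x,ξ)} dμ = ∫₀^∞ a e^{-a s} μ(B(ξ,s)) ds ≤ C₁ a ∫₀^∞ sⁿ e^{-a s} ds
= C₁ n! / aⁿ = C₁ n! ν⁻ⁿ hⁿ`.
-/

open MeasureTheory Set

lemma Real.image_exp_neg_mul_Ioi {a : ℝ} (ha : 0 < a) :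
    (fun s => Real.exp (-a * s)) '' Ioi 0 = Ioo 0 1 := by
  ext t
  constructor
  · rintro ⟨s, hs, rfl⟩
    exact ⟨Real.exp_pos _, Real.exp_lt_one_iff.mpr (by nlinarith [mem_Ioi.mp hs])⟩
  · rintro ⟨ht0, ht1⟩
    refine ⟨-Real.log t / a, div_pos (neg_pos.mpr (Real.log_neg ht0 ht1)) ha, ?_⟩
    simp only [neg_mul, mul_div_cancel₀ _ ha.ne', neg_neg, Real.exp_log ht0]

lemma lintegral_pow_mul_exp_neg_mul_Ioi (n : ℕ) {a : ℝ} (ha : 0 < a) :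
    ∫⁻ s in Ioi 0, ENNReal.ofReal (s ^ n * Real.exp (-a * s)) =
      ENNReal.ofReal (n.factorial / a ^ (n + 1)) := by
  have hΓ : ∫ s in Ioi 0, s ^ n * Real.exp (-a * s) = n.factorial / a ^ (n + 1) := by
    have := Real.integral_rpow_mul_exp_neg_mul_Ioi (a := n + 1) (by positivity) ha
    simp_rw [add_sub_cancel_right, Real.rpow_natCast, ← neg_mul] at this
    rw [this, Real.Gamma_nat_eq_factorial, ← Nat.cast_add_one, Real.rpow_natCast, one_div_pow,
      one_div_mul_eq_div]
  rw [← hΓ, ofReal_integral_eq_lintegral_ofReal]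
  · exact Integrable.of_integral_ne_zero (by rw [hΓ]; positivity)
  · exact (ae_restrict_iff' measurableSet_Ioi).mpr (.of_forall fun s hs => by
      have : 0 < s := hs; positivity)

lemma exp_neg_mul_dist_le_one {M : Type*} [PseudoMetricSpace M] {a : ℝ} (ha : 0 ≤ a) (x y : M) :
    Real.exp (-a * dist x y) ≤ 1 :=
  Real.exp_le_one_iff.mpr (mul_nonpos_of_nonpos_of_nonneg (neg_nonpos.mpr ha) dist_nonneg)

section

variable {M : Type*} [PseudoMetricSpace M] [MeasurableSpace M] [OpensMeasurableSpace M]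

theorem lintegral_exp_neg_mul_dist (μ : Measure M) (ξ : M) {a : ℝ} (ha : 0 < a) :
    ∫⁻ x, ENNReal.ofReal (Real.exp (-a * dist x ξ)) ∂μ =
      ∫⁻ s in Ioi 0, ENNReal.ofReal (a * Real.exp (-a * s)) * μ (Metric.ball ξ s) := by
  have hf : Measurable fun x => Real.exp (-a * dist x ξ) := by fun_prop
  have hvanish : ∀ t ∈ Ici (1 : ℝ), μ {x | t < Real.exp (-a * dist x ξ)} = 0 :=
    fun t (ht : 1 ≤ t) => measure_mono_null (fun x (hx : t < _) =>
      (exp_neg_mul_dist_le_one ha.le x ξ).not_gt (ht.trans_lt hx)) measure_empty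
  have hlevel : ∀ s, {x | Real.exp (-a * s) < Real.exp (-a * dist x ξ)} = Metric.ball ξ s := by
    intro s
    ext x
    simp only [mem_ofPred_eq, Real.exp_lt_exp, Metric.mem_ball, neg_mul, neg_lt_neg_iff,
      mul_lt_mul_iff_right₀ ha]
  have hderiv : ∀ s ∈ Ioi (0 : ℝ),
      HasDerivWithinAt (fun s => Real.exp (-a * s)) (Real.exp (-a * s) * -a) (Ioi 0) s :=
    fun s _ => ((hasDerivAt_id s).const_mul (-a)).exp.hasDerivWithinAt.congr_deriv (by simp)
  have hinj : InjOn (fun s => Real.exp (-a * s)) (Ioi 0) :=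
    fun s _ t _ hst => by simpa [ha.ne'] using Real.exp_injective hst
  calc ∫⁻ x, ENNReal.ofReal (Real.exp (-a * dist x ξ)) ∂μ
      = ∫⁻ t in Ioi 0, μ {x | t < Real.exp (-a * dist x ξ)} :=
        lintegral_eq_lintegral_meas_lt μ (.of_forall fun _ => (Real.exp_pos _).le) hf.aemeasurable
    _ = ∫⁻ t in Ioo 0 1, μ {x | t < Real.exp (-a * dist x ξ)} := by
        have hdisj : Disjoint (Ioo (0 : ℝ) 1) (Ici 1) :=
          disjoint_left.mpr fun _ ht ht' => (not_le.mpr ht.2) ht'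
        rw [← Ioo_union_Ici_eq_Ioi zero_lt_one, lintegral_union measurableSet_Ici hdisj,
          setLIntegral_congr_fun measurableSet_Ici hvanish, lintegral_zero, add_zero]
    _ = _ := by
        rw [← Real.image_exp_neg_mul_Ioi ha, lintegral_image_eq_lintegral_abs_deriv_mul
          measurableSet_Ioi hderiv hinj]
        refine setLIntegral_congr_fun measurableSet_Ioi fun s _ => ?_
        rw [hlevel, abs_mul, abs_neg, abs_of_pos ha, abs_of_pos (Real.exp_pos _), mul_comm a]

theorem lintegral_exp_neg_mul_dist_le (μ : Measure M) (ξ : M) {C a : ℝ} {n : ℕ} (hC : 0 ≤ C)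
    (hball : ∀ r : ℝ, 0 < r → μ (Metric.ball ξ r) ≤ ENNReal.ofReal (C * r ^ n)) (ha : 0 < a) :
    ∫⁻ x, ENNReal.ofReal (Real.exp (-a * dist x ξ)) ∂μ ≤
      ENNReal.ofReal (C * n.factorial / a ^ n) := by
  rw [lintegral_exp_neg_mul_dist μ ξ ha]
  calc ∫⁻ s in Ioi 0, ENNReal.ofReal (a * Real.exp (-a * s)) * μ (Metric.ball ξ s)
      ≤ ∫⁻ s in Ioi 0, ENNReal.ofReal (a * C) * ENNReal.ofReal (s ^ n * Real.exp (-a * s)) := by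
        refine setLIntegral_mono' measurableSet_Ioi fun s hs => ?_
        calc ENNReal.ofReal (a * Real.exp (-a * s)) * μ (Metric.ball ξ s)
            ≤ ENNReal.ofReal (a * Real.exp (-a * s)) * ENNReal.ofReal (C * s ^ n) := by
              gcongr; exact hball s hs
          _ = _ := by
              rw [← ENNReal.ofReal_mul (by positivity), ← ENNReal.ofReal_mul (by positivity)]
              ring_nf
    _ = ENNReal.ofReal (a * C) * ENNReal.ofReal (n.factorial / a ^ (n + 1)) := by
        rw [lintegral_const_mul' _ _ ENNReal.ofReal_ne_top, lintegral_pow_mul_exp_neg_mul_Ioi n ha]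
    _ = ENNReal.ofReal (C * n.factorial / a ^ n) := by
        rw [← ENNReal.ofReal_mul (by positivity)]
        congr 1
        field_simp
        ring

theorem integral_exp_neg_mul_dist_le (μ : Measure M) (ξ : M) {C a : ℝ} {n : ℕ} (hC : 0 ≤ C)
    (hball : ∀ r : ℝ, 0 < r → μ (Metric.ball ξ r) ≤ ENNReal.ofReal (C * r ^ n)) (ha : 0 < a) :
    ∫ x, Real.exp (-a * dist x ξ) ∂μ ≤ C * n.factorial / a ^ n := by
  rw [integral_eq_lintegral_of_nonneg_ae (.of_forall fun _ => (Real.exp_pos _).le)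
    (by fun_prop)]
  exact ENNReal.toReal_le_of_le_ofReal (by positivity)
    (lintegral_exp_neg_mul_dist_le μ ξ hC hball ha)

end

theorem lagrange_L1_bound_general
    {M : Type*} [MetricSpace M] [MeasurableSpace M] [BorelSpace M]
    (μ : Measure M) [IsFiniteMeasure μ]
    (ξ : M) (C₁ : ℝ) (hC₁ : 0 < C₁) (n : ℕ)
    (hball : ∀ r : ℝ, 0 < r → μ (Metric.ball ξ r) ≤ ENNReal.ofReal (C₁ * r ^ n))
    (ν : ℝ) (hν : 0 < ν) (m : ℕ) (hm : n < 2 * m)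
    (h : ℝ) (hh0 : 0 < h) (hh1 : h ≤ 1) (C₀ : ℝ) (hC₀ : 0 < C₀)
    (χ : M → ℝ)
    (hχ : ∀ x : M, |χ x| ≤ C₀ * max (Real.exp (-(ν / h) * dist x ξ)) (h ^ (2 * m))) :
    ∫ x, |χ x| ∂μ ≤
      C₀ * (C₁ * (Nat.factorial n : ℝ) / ν ^ n + (μ Set.univ).toReal) * h ^ n := by
  set a := ν / h
  have ha : 0 < a := div_pos hν hh0
  have hχ_le : ∀ x, |χ x| ≤ C₀ * Real.exp (-a * dist x ξ) + C₀ * h ^ (2 * m) := fun x =>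
    (hχ x).trans <| by
      rw [← mul_add]
      gcongr
      exact max_le_add_of_nonneg (Real.exp_pos _).le (by positivity)
  have hexp_int : Integrable (fun x => Real.exp (-a * dist x ξ)) μ :=
    .of_bound (by fun_prop) 1 (.of_forall fun x => by
      rw [Real.norm_eq_abs, Real.abs_exp]
      exact exp_neg_mul_dist_le_one ha.le x ξ)
  calc ∫ x, |χ x| ∂μ
      ≤ ∫ x, (C₀ * Real.exp (-a * dist x ξ) + C₀ * h ^ (2 * m)) ∂μ :=
        integral_mono_of_nonneg (.of_forall fun x => abs_nonneg _)
          ((hexp_int.const_mul C₀).add (integrable_const _)) (.of_forall hχ_le)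
    _ = C₀ * ∫ x, Real.exp (-a * dist x ξ) ∂μ + C₀ * h ^ (2 * m) * (μ Set.univ).toReal := by
        rw [integral_add (hexp_int.const_mul C₀) (integrable_const _), integral_const_mul,
          integral_const, smul_eq_mul, measureReal_def]
        ring
    _ ≤ C₀ * (C₁ * n.factorial / a ^ n) + C₀ * h ^ n * (μ Set.univ).toReal := by
        gcongr C₀ * ?_ + C₀ * ?_ * _
        · exact integral_exp_neg_mul_dist_le μ ξ hC₁.le hball ha
        · exact pow_le_pow_of_le_one hh0.le hh1 hm.le
    _ = C₀ * (C₁ * n.factorial / ν ^ n + (μ Set.univ).toReal) * h ^ n := by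
        rw [div_pow]
        field_simp

/-- If `|χ(x)| ≤ C₀ max(exp(−(ν/h)d(x,ξ)), h^{2m})` with `2m > n`,
`0 < h ≤ 1`, and the measure satisfies `μ(B(ξ,r)) ≤ C₁ rⁿ`, then
`‖χ‖_{L¹} ≤ C₀ (C₁ n! ν^{−n} + μ(M)) hⁿ`. -/
theorem lagrange_L1_bound
    {M : Type*} [MetricSpace M] [MeasurableSpace M] [BorelSpace M]
    (μ : Measure M) [IsFiniteMeasure μ]
    (ξ : M) (C₁ : ℝ) (hC₁ : 0 < C₁) (n : ℕ) (hn : 1 ≤ n)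
    (hball : ∀ r : ℝ, 0 < r → μ (Metric.ball ξ r) ≤ ENNReal.ofReal (C₁ * r ^ n))
    (ν : ℝ) (hν : 0 < ν) (m : ℕ) (hm : n < 2 * m)
    (h : ℝ) (hh0 : 0 < h) (hh1 : h ≤ 1) (C₀ : ℝ) (hC₀ : 0 < C₀)
    (χ : M → ℝ) (hχm : Measurable χ)
    (hχ : ∀ x : M, |χ x| ≤ C₀ * max (Real.exp (-(ν / h) * dist x ξ)) (h ^ (2 * m))) :
    ∫ x, |χ x| ∂μ ≤
      C₀ * (C₁ * (Nat.factorial n : ℝ) / ν ^ n + (μ Set.univ).toReal) * h ^ n :=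
  lagrange_L1_bound_general μ ξ C₁ hC₁ n hball ν hν m hm h hh0 hh1 C₀ hC₀ χ hχ
end
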